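/- If additionally x⁺ is drawn from p⁺ independent of the samples, then E[P̂] = ∫∫ h(x⁺, x⁻) p⁺(x⁺) p⁻(x⁻) dx⁺ dx⁻, i.e., the debiased estimator is an unbiased estimator of the AUC risk R_AUC = E_{x⁺∼p⁺, x⁻∼p⁻}[h(x⁺,x⁻)]. -/

import Mathlib

open MeasureTheory

/-! Each summand `h (x⁺, Xₙ)` has expectation `τ⁺ A + τ⁻ R_AUC`, where `A = E h(x⁺, x')` for an
independent `x' ∼ p⁺`, because `Xₙ ∼ τ⁺ p⁺ + τ⁻ p⁻` is independent of `x⁺`; each summand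
`h (x⁺, X'ₘ)` has expectation `A`. The normalisations make the `A` terms cancel, leaving `R_AUC`. -/

section

variable {Ω α β E : Type*} [MeasurableSpace Ω] [MeasurableSpace α] [MeasurableSpace β]
  [NormedAddCommGroup E] [NormedSpace ℝ E]

theorem ProbabilityTheory.IndepFun.integral_comp_prodMk [CompleteSpace E] {μ : Measure Ω}
    [IsFiniteMeasure μ] {f : Ω → α} {g : Ω → β} (hfg : IndepFun f g μ) (hf : AEMeasurable f μ)
    (hg : AEMeasurable g μ) {φ : α × β → E} (hφ : Integrable φ ((μ.map f).prod (μ.map g))) :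
    ∫ ω, φ (f ω, g ω) ∂μ = ∫ x, ∫ y, φ (x, y) ∂(μ.map g) ∂(μ.map f) := by
  have hlaw := hfg.map_prod_eq_prod_map_map hf hg
  rw [← integral_prod φ hφ, ← hlaw, integral_map (hf.prodMk hg) (hlaw ▸ hφ.aestronglyMeasurable)]

theorem integral_ofReal_smul_add_ofReal_smul {μ ν : Measure α} {a b : ℝ} (ha : 0 ≤ a)
    (hb : 0 ≤ b) {f : α → E} (hμ : Integrable f μ) (hν : Integrable f ν) :
    ∫ x, f x ∂(ENNReal.ofReal a • μ + ENNReal.ofReal b • ν) =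
      a • ∫ x, f x ∂μ + b • ∫ x, f x ∂ν := by
  rw [integral_add_measure (hμ.smul_measure ENNReal.ofReal_ne_top)
      (hν.smul_measure ENNReal.ofReal_ne_top), integral_smul_measure, integral_smul_measure,
    ENNReal.toReal_ofReal ha, ENNReal.toReal_ofReal hb]

theorem integral_integral_ofReal_smul_add_ofReal_smul [CompleteSpace E] {ν : Measure β}
    {μ₁ μ₂ : Measure α} [SFinite ν] [SFinite μ₁] [SFinite μ₂] {a b : ℝ} (ha : 0 ≤ a)
    (hb : 0 ≤ b) {f : β × α → E} (h₁ : Integrable f (ν.prod μ₁)) (h₂ : Integrable f (ν.prod μ₂)) :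
    ∫ x, ∫ y, f (x, y) ∂(ENNReal.ofReal a • μ₁ + ENNReal.ofReal b • μ₂) ∂ν =
      a • ∫ x, ∫ y, f (x, y) ∂μ₁ ∂ν + b • ∫ x, ∫ y, f (x, y) ∂μ₂ ∂ν := by
  have hsplit : (fun x ↦ ∫ y, f (x, y) ∂(ENNReal.ofReal a • μ₁ + ENNReal.ofReal b • μ₂)) =ᵐ[ν]
      fun x ↦ a • ∫ y, f (x, y) ∂μ₁ + b • ∫ y, f (x, y) ∂μ₂ := by
    filter_upwards [h₁.prod_right_ae, h₂.prod_right_ae] with x hx₁ hx₂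
    exact integral_ofReal_smul_add_ofReal_smul ha hb hx₁ hx₂
  rw [integral_congr_ae hsplit, integral_add (h₁.integral_prod_left.fun_smul a)
    (h₂.integral_prod_left.fun_smul b), integral_smul, integral_smul]

end

theorem debiased_estimator_unbiased_auc_general {X Ω : Type*} [MeasurableSpace X] [MeasurableSpace Ω]
    (ℙ : Measure Ω) [IsProbabilityMeasure ℙ]
    (μp μm : Measure X) [IsProbabilityMeasure μp] [IsProbabilityMeasure μm]
    (τp τm : ℝ) (hτp : 0 ≤ τp) (hτm : 0 < τm)
    (μ : Measure X) (hμ : μ = ENNReal.ofReal τp • μp + ENNReal.ofReal τm • μm)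
    (h : X × X → ℝ) (hmeas : Measurable h) (C : ℝ) (hbdd : ∀ z, |h z| ≤ C)
    (N M : ℕ) (hN : 0 < N) (hM : 0 < M)
    (Xplus : Ω → X) (Xs : Fin N → Ω → X) (Xs' : Fin M → Ω → X)
    (hXpmeas : Measurable Xplus)
    (hXmeas : ∀ n, Measurable (Xs n)) (hX'meas : ∀ m, Measurable (Xs' m))
    (hXplaw : Measure.map Xplus ℙ = μp)
    (hXlaw : ∀ n, Measure.map (Xs n) ℙ = μ) (hX'law : ∀ m, Measure.map (Xs' m) ℙ = μp)
    (hindep : ProbabilityTheory.iIndepFun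
      (fun k : Option (Fin N ⊕ Fin M) => Option.elim k Xplus (Sum.elim Xs Xs')) ℙ) :
    ∫ ω, ((1 / (N * τm)) * ∑ n, h (Xplus ω, Xs n ω) -
          (τp / (M * τm)) * ∑ m, h (Xplus ω, Xs' m ω)) ∂ℙ =
      ∫ xp, ∫ xm, h (xp, xm) ∂μm ∂μp := by
  have hint (ν : Measure (X × X)) [IsFiniteMeasure ν] : Integrable h ν :=
    .of_bound hmeas.aestronglyMeasurable C (.of_forall hbdd)
  have hpair {Y : Ω → X} (hY : Measurable Y) (hind : ProbabilityTheory.IndepFun Xplus Y ℙ) :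
      ∫ ω, h (Xplus ω, Y ω) ∂ℙ = ∫ x, ∫ y, h (x, y) ∂(ℙ.map Y) ∂μp := by
    rw [hind.integral_comp_prodMk hXpmeas.aemeasurable hY.aemeasurable (hint _), hXplaw]
  have hindep_plus (k : Fin N ⊕ Fin M) :
      ProbabilityTheory.IndepFun Xplus (Sum.elim Xs Xs' k) ℙ :=
    hindep.indepFun (i := none) (j := some k) nofun
  have hXs (n : Fin N) : ∫ ω, h (Xplus ω, Xs n ω) ∂ℙ =
      τp * ∫ x, ∫ y, h (x, y) ∂μp ∂μp + τm * ∫ x, ∫ y, h (x, y) ∂μm ∂μp := by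
    rw [hpair (hXmeas n) (hindep_plus (.inl n)), hXlaw, hμ]
    exact integral_integral_ofReal_smul_add_ofReal_smul hτp hτm.le (hint _) (hint _)
  have hXs' (m : Fin M) : ∫ ω, h (Xplus ω, Xs' m ω) ∂ℙ = ∫ x, ∫ y, h (x, y) ∂μp ∂μp := by
    rw [hpair (hX'meas m) (hindep_plus (.inr m)), hX'law]
  have hterm {Y : Ω → X} (hY : Measurable Y) : Integrable (fun ω ↦ h (Xplus ω, Y ω)) ℙ :=
    (hint _).comp_measurable (hXpmeas.prodMk hY)
  rw [integral_sub ((integrable_finsetSum _ fun n _ ↦ hterm (hXmeas n)).const_mul _)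
      ((integrable_finsetSum _ fun m _ ↦ hterm (hX'meas m)).const_mul _),
    integral_const_mul, integral_const_mul, integral_finsetSum _ fun n _ ↦ hterm (hXmeas n),
    integral_finsetSum _ fun m _ ↦ hterm (hX'meas m)]
  simp only [hXs, hXs', Finset.sum_const, Finset.card_univ, Fintype.card_fin, nsmul_eq_mul]
  field_simp
  ring

/-- If additionally `x⁺ ∼ p⁺` independently of all the samples, then the debiased
estimator `P̂` is an unbiased estimator of the AUC risk
`R_AUC = E_{x⁺∼p⁺, x⁻∼p⁻} h(x⁺, x⁻)`. -/
theorem debiased_estimator_unbiased_auc {X Ω : Type*} [MeasurableSpace X] [MeasurableSpace Ω]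
    (ℙ : Measure Ω) [IsProbabilityMeasure ℙ]
    (μp μm : Measure X) [IsProbabilityMeasure μp] [IsProbabilityMeasure μm]
    (τp τm : ℝ) (hτp : 0 ≤ τp) (hτm : 0 < τm) (hsum : τp + τm = 1)
    (μ : Measure X) (hμ : μ = ENNReal.ofReal τp • μp + ENNReal.ofReal τm • μm)
    (h : X × X → ℝ) (hmeas : Measurable h) (C : ℝ) (hbdd : ∀ z, |h z| ≤ C)
    (N M : ℕ) (hN : 0 < N) (hM : 0 < M)
    (Xplus : Ω → X) (Xs : Fin N → Ω → X) (Xs' : Fin M → Ω → X)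
    (hXpmeas : Measurable Xplus)
    (hXmeas : ∀ n, Measurable (Xs n)) (hX'meas : ∀ m, Measurable (Xs' m))
    (hXplaw : Measure.map Xplus ℙ = μp)
    (hXlaw : ∀ n, Measure.map (Xs n) ℙ = μ) (hX'law : ∀ m, Measure.map (Xs' m) ℙ = μp)
    (hindep : ProbabilityTheory.iIndepFun
      (fun k : Option (Fin N ⊕ Fin M) => Option.elim k Xplus (Sum.elim Xs Xs')) ℙ) :
    ∫ ω, ((1 / (N * τm)) * ∑ n, h (Xplus ω, Xs n ω) -
          (τp / (M * τm)) * ∑ m, h (Xplus ω, Xs' m ω)) ∂ℙ =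
      ∫ xp, ∫ xm, h (xp, xm) ∂μm ∂μp :=
  debiased_estimator_unbiased_auc_general ℙ μp μm τp τm hτp hτm μ hμ h hmeas C hbdd N M hN hM Xplus
    Xs Xs' hXpmeas hXmeas hX'meas hXplaw hXlaw hX'law hindep
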